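/- arXiv:1310.0755 — 2 statements merged into one kernel-verified Lean document; each statement's English description precedes it below -/
import Mathlib

section
/- For every skew-Hermitian matrix A in 𝔲(m) with operator norm ‖A‖ ≤ π, the matrix exponential satisfies ‖exp(A) − Id‖ = 2·sin(‖A‖/2). -/
/-!
A skew-adjoint element `a` is normal with purely imaginary spectrum, so by the continuous
functional calculus `‖exp a - 1‖` is the maximum over the spectrum of `|e^z - 1| = 2 sin(|z|/2)`.
Every spectral value has `|z| ≤ ‖a‖ ≤ π`, where `sin (·/2)` is increasing, and since the spectral
radius of a normal element is its norm, some spectral value has `|z| = ‖a‖`.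
-/

theorem Complex.norm_exp_sub_one_of_re_eq_zero {z : ℂ} (hre : z.re = 0)
    (hz : ‖z‖ ≤ Real.pi) : ‖exp z - 1‖ = 2 * Real.sin (‖z‖ / 2) := by
  have hzI : z = I * z.im := by apply Complex.ext <;> simp [hre]
  have hnorm : ‖z‖ = |z.im| := by rw [hzI]; simp
  have hπ : |z.im / 2| ≤ Real.pi := by
    rw [abs_div, abs_two, ← hnorm]; linarith [Real.pi_pos]
  rw [hzI, norm_exp_I_mul_ofReal_sub_one, ← hzI, norm_mul, Real.norm_two, Real.norm_eq_abs,
    Real.abs_sin_eq_sin_abs_of_abs_le_pi hπ, hnorm, abs_div, abs_two]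

section CStarAlgebra

variable {A : Type*} [CStarAlgebra A]

theorem re_eq_zero_of_mem_spectrum_of_star_eq_neg {a : A} (ha : star a = -a) {z : ℂ}
    (hz : z ∈ spectrum ℂ a) : z.re = 0 := by
  have hsa : IsSelfAdjoint (Complex.I • a) := by
    simp [IsSelfAdjoint, star_smul, ha]
  have hmem : Complex.I • z ∈ spectrum ℂ (Complex.I • a) :=
    (spectrum.smul_mem_smul_iff (r := Units.mk0 Complex.I Complex.I_ne_zero)).mpr hz
  simpa using hsa.im_eq_zero_of_mem_spectrum hmem

theorem IsStarNormal.exists_mem_spectrum_norm_eq [Nontrivial A] (a : A) [IsStarNormal a] :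
    ∃ z ∈ spectrum ℂ a, ‖z‖ = ‖a‖ := by
  obtain ⟨z, hz, hrad⟩ := spectrum.exists_nnnorm_eq_spectralRadius a
  rw [IsStarNormal.spectralRadius_eq_nnnorm a, ENNReal.coe_inj] at hrad
  exact ⟨z, hz, congrArg NNReal.toReal hrad⟩

theorem norm_exp_sub_one_of_star_eq_neg {a : A} (ha : star a = -a) (hπ : ‖a‖ ≤ Real.pi) :
    ‖NormedSpace.exp a - 1‖ = 2 * Real.sin (‖a‖ / 2) := by
  rcases subsingleton_or_nontrivial A with hA | hA
  · simp [Subsingleton.elim a 0]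
  have : IsStarNormal a := ⟨by rw [ha]; exact (Commute.refl a).neg_left⟩
  have hexp : NormedSpace.exp a - 1 = cfc (fun z : ℂ => Complex.exp z - 1) a := by
    rw [cfc_sub _ _ a, cfc_const_one ℂ a, CFC.complex_exp_eq_normedSpace_exp]
  have hval : ∀ z ∈ spectrum ℂ a, ‖Complex.exp z - 1‖ = 2 * Real.sin (‖z‖ / 2) := fun z hz =>
    Complex.norm_exp_sub_one_of_re_eq_zero (re_eq_zero_of_mem_spectrum_of_star_eq_neg ha hz)
      ((spectrum.norm_le_norm_of_mem hz).trans hπ)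
  obtain ⟨z₀, hz₀, hz₀a⟩ := IsStarNormal.exists_mem_spectrum_norm_eq a
  rw [hexp]
  refine (IsGreatest.norm_cfc (fun z : ℂ => Complex.exp z - 1) a).unique
    ⟨⟨z₀, hz₀, (hval z₀ hz₀).trans (by rw [hz₀a])⟩, ?_⟩
  rintro _ ⟨z, hz, rfl⟩
  have hza := spectrum.norm_le_norm_of_mem hz
  dsimp only
  rw [hval z hz]
  gcongr
  exact Real.sin_le_sin_of_le_of_le_pi_div_two (by linarith [norm_nonneg z, Real.pi_pos])
    (by linarith) (by linarith)

end CStarAlgebra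

/-- For a skew-Hermitian operator `A` on `ℂ^m` with operator norm `‖A‖ ≤ π`,
`‖exp A - Id‖ = 2 sin(‖A‖/2)`. -/
theorem stmt_0 (m : ℕ)
    (A : EuclideanSpace ℂ (Fin m) →L[ℂ] EuclideanSpace ℂ (Fin m))
    (hskew : ContinuousLinearMap.adjoint A = -A)
    (hnorm : ‖A‖ ≤ Real.pi) :
    ‖NormedSpace.exp A - 1‖ = 2 * Real.sin (‖A‖ / 2) :=
  norm_exp_sub_one_of_star_eq_neg (by rw [ContinuousLinearMap.star_eq_adjoint, hskew]) hnorm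
end

section
/- The map exp restricted to {A ∈ 𝔲(m) : ‖A‖ < 1/2} is injective with image contained in {B ∈ U(m) : ‖B − Id‖ < 2 sin(1/4)}, and every B ∈ U(m) with ‖B − Id‖ < 2 sin(1/4) is exp(A) for a unique A with ‖A‖ < 1/2. -/
/-!
For a normal element `a` of a C⋆-algebra with `‖a‖ < π` the spectrum lies in the strip
`|Im z| < π`, on which the principal logarithm inverts `exp`; by the continuous functional
calculus `cfc log (exp a) = a`, so `exp` is injective there. For skew-adjoint `a` the spectrum is
imaginary, and `|exp (iθ) - 1| = 2 sin (|θ| / 2)` bounds `‖exp a - 1‖` spectrally. Conversely the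
spectrum of a unitary `u` lies on the unit circle within distance `‖u - 1‖` of `1`, so its
arguments are `< r` when `‖u - 1‖ < 2 sin (r / 2)`, and `cfc log u` is a skew-adjoint logarithm
of `u` of norm `< r`.
-/

open Complex
open scoped Real

namespace Complex

lemma norm_exp_ofReal_mul_I_sub_one {θ : ℝ} (hθ : |θ| ≤ π) :
    ‖exp (θ * I) - 1‖ = 2 * Real.sin (|θ| / 2) := by
  have hθ2 : |θ / 2| ≤ π := by rw [abs_div, abs_two]; linarith [abs_nonneg θ]
  rw [mul_comm, norm_exp_I_mul_ofReal_sub_one, norm_mul, Real.norm_eq_abs, abs_two,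
    Real.norm_eq_abs, Real.abs_sin_eq_sin_abs_of_abs_le_pi hθ2, abs_div, abs_two]

lemma norm_sub_one_eq_of_norm_eq_one {z : ℂ} (hz : ‖z‖ = 1) :
    ‖z - 1‖ = 2 * Real.sin (|arg z| / 2) := by
  have hexp : exp (arg z * I) = z := by
    simpa [hz] using norm_mul_exp_arg_mul_I z
  rw [← norm_exp_ofReal_mul_I_sub_one (abs_le.2 ⟨(neg_pi_lt_arg z).le, arg_le_pi z⟩), hexp]

lemma mem_slitPlane_of_norm_eq_one {z : ℂ} (hz : ‖z‖ = 1) (h : ‖z - 1‖ < 2) : z ∈ slitPlane := by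
  refine mem_slitPlane_iff_arg.mpr ⟨fun harg => ?_, norm_ne_zero_iff.mp (by simp [hz])⟩
  simp [norm_sub_one_eq_of_norm_eq_one hz, harg, abs_of_pos Real.pi_pos] at h

lemma log_of_norm_eq_one {z : ℂ} (hz : ‖z‖ = 1) : log z = arg z * I := by
  simp [log, hz]

end Complex

section CStarAlgebra

variable {A : Type*} [CStarAlgebra A]

lemma norm_le_norm_of_mem_spectrum {a : A} {z : ℂ} (hz : z ∈ spectrum ℂ a) : ‖z‖ ≤ ‖a‖ := by
  cases subsingleton_or_nontrivial A
  · simp [spectrum.of_subsingleton] at hz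
  · exact spectrum.norm_le_norm_of_mem hz

lemma norm_sub_one_le_of_mem_spectrum {a : A} {z : ℂ} (hz : z ∈ spectrum ℂ a) :
    ‖z - 1‖ ≤ ‖a - 1‖ := by
  have : z - 1 ∈ spectrum ℂ (a - 1) := by
    rw [← map_one (algebraMap ℂ A), ← spectrum.sub_singleton_eq]
    exact Set.sub_mem_sub hz rfl
  exact norm_le_norm_of_mem_spectrum this

lemma re_eq_zero_of_mem_spectrum_of_mem_skewAdjoint {a : A} (ha : a ∈ skewAdjoint A) {z : ℂ}
    (hz : z ∈ spectrum ℂ a) : z.re = 0 := by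
  have hIa : IsSelfAdjoint (I • a) := by
    rw [IsSelfAdjoint, star_smul, skewAdjoint.mem_iff.mp ha, Complex.star_def, conj_I, neg_smul_neg]
  have hIz : I * z ∈ spectrum ℂ (I • a) := by
    simpa [Units.smul_def] using
      (spectrum.unit_smul_eq_smul a (Units.mk0 I I_ne_zero) ▸ Set.smul_mem_smul_set hz :
        (Units.mk0 I I_ne_zero) • z ∈ spectrum ℂ ((Units.mk0 I I_ne_zero) • a))
  simpa using congrArg im (hIa.mem_spectrum_eq_re hIz)

lemma cfc_log_exp_of_norm_lt_pi {a : A} (ha : IsStarNormal a) (hn : ‖a‖ < π) :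
    cfc log (NormedSpace.exp a) = a := by
  have him : ∀ z ∈ spectrum ℂ a, |z.im| < π := fun z hz =>
    ((abs_im_le_norm z).trans (norm_le_norm_of_mem_spectrum hz)).trans_lt hn
  have hlog : ContinuousOn log (exp '' spectrum ℂ a) := by
    rintro _ ⟨z, hz, rfl⟩
    refine (continuousAt_clog ?_).continuousWithinAt
    have := abs_lt.mp (him z hz)
    rw [exp_mem_slitPlane, toIocMod_eq_self _ |>.mpr ⟨this.1, by linarith⟩]
    exact this.2.ne
  rw [← CFC.complex_exp_eq_normedSpace_exp, ← cfc_comp' log exp a hlog]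
  calc cfc (fun z => log (exp z)) a = cfc id a :=
        cfc_congr fun z hz => log_exp (neg_lt_of_abs_lt (him z hz)) (le_of_abs_le (him z hz).le)
    _ = a := cfc_id ℂ a

lemma injOn_exp_of_norm_lt_pi : Set.InjOn NormedSpace.exp {a : A | IsStarNormal a ∧ ‖a‖ < π} := by
  rintro a ⟨ha, han⟩ b ⟨hb, hbn⟩ h
  rw [← cfc_log_exp_of_norm_lt_pi ha han, ← cfc_log_exp_of_norm_lt_pi hb hbn, h]

lemma exp_mem_unitary_of_mem_skewAdjoint {a : A} (ha : a ∈ skewAdjoint A) :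
    NormedSpace.exp a ∈ unitary A :=
  let +nondep : NormedAlgebra ℚ A := .restrictScalars ℚ ℂ A
  NormedSpace.exp_mem_unitary_of_mem_skewAdjoint ha

lemma norm_exp_sub_one_lt_two_mul_sin {a : A} (ha : a ∈ skewAdjoint A) {r : ℝ} (hr : r ≤ π)
    (hn : ‖a‖ < r) : ‖NormedSpace.exp a - 1‖ < 2 * Real.sin (r / 2) := by
  have hr0 : 0 < r := (norm_nonneg a).trans_lt hn
  have hN : IsStarNormal a := skewAdjoint.isStarNormal_of_mem ha
  rw [← CFC.complex_exp_eq_normedSpace_exp, ← cfc_one ℂ a, ← cfc_sub exp 1 a]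
  refine norm_cfc_lt (mul_pos two_pos (Real.sin_pos_of_pos_of_lt_pi (half_pos hr0) (by linarith)))
    fun z hz => ?_
  have hzI : z = (z.im : ℂ) * I := by
    apply Complex.ext <;> simp [re_eq_zero_of_mem_spectrum_of_mem_skewAdjoint ha hz]
  have him : |z.im| < r := ((abs_im_le_norm z).trans (norm_le_norm_of_mem_spectrum hz)).trans_lt hn
  rw [Pi.one_apply, hzI, norm_exp_ofReal_mul_I_sub_one (by linarith)]
  gcongr
  exact Real.sin_lt_sin_of_lt_of_le_pi_div_two (by linarith [abs_nonneg z.im]) (by linarith)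
    (by linarith)

lemma abs_arg_lt_of_mem_spectrum {u : A} (hu : u ∈ unitary A) {r : ℝ} (hr₀ : 0 < r) (hr : r ≤ π)
    (hn : ‖u - 1‖ < 2 * Real.sin (r / 2)) {z : ℂ} (hz : z ∈ spectrum ℂ u) : |arg z| < r := by
  have hz1 : ‖z‖ = 1 := by simpa using spectrum.subset_circle_of_unitary hu hz
  by_contra! h
  have : Real.sin (r / 2) ≤ Real.sin (|arg z| / 2) :=
    Real.sin_le_sin_of_le_of_le_pi_div_two (by linarith) (by linarith [abs_arg_le_pi z])
      (by linarith)
  linarith [norm_sub_one_le_of_mem_spectrum hz, norm_sub_one_eq_of_norm_eq_one hz1]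

lemma spectrum_subset_slitPlane_of_mem_unitary {u : A} (hu : u ∈ unitary A) (hn : ‖u - 1‖ < 2) :
    spectrum ℂ u ⊆ slitPlane := fun z hz =>
  mem_slitPlane_of_norm_eq_one (by simpa using spectrum.subset_circle_of_unitary hu hz)
    ((norm_sub_one_le_of_mem_spectrum hz).trans_lt hn)

lemma cfc_log_mem_skewAdjoint {u : A} (hu : u ∈ unitary A) : cfc log u ∈ skewAdjoint A := by
  rw [skewAdjoint.mem_iff, ← cfc_star, ← cfc_neg]
  refine cfc_congr fun z hz => ?_
  simp [log_of_norm_eq_one (by simpa using spectrum.subset_circle_of_unitary hu hz)]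

lemma norm_cfc_log_lt {u : A} (hu : u ∈ unitary A) {r : ℝ} (hr₀ : 0 < r) (hr : r ≤ π)
    (hn : ‖u - 1‖ < 2 * Real.sin (r / 2)) : ‖cfc log u‖ < r := by
  refine norm_cfc_lt hr₀ fun z hz => ?_
  simpa [log_of_norm_eq_one (by simpa using spectrum.subset_circle_of_unitary hu hz)] using
    abs_arg_lt_of_mem_spectrum hu hr₀ hr hn hz

lemma exp_cfc_log {a : A} (ha : IsStarNormal a) (hσ : spectrum ℂ a ⊆ slitPlane) :
    NormedSpace.exp (cfc log a) = a := by
  have hlog : ContinuousOn log (spectrum ℂ a) := fun z hz =>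
    (continuousAt_clog (hσ hz)).continuousWithinAt
  rw [← CFC.complex_exp_eq_normedSpace_exp, ← cfc_comp' exp log a continuous_exp.continuousOn hlog]
  calc cfc (fun z => exp (log z)) a = cfc id a :=
        cfc_congr fun z hz => exp_log (slitPlane_ne_zero (hσ hz))
    _ = a := cfc_id ℂ a

end CStarAlgebra

open ContinuousLinearMap

/-- `exp` is injective on `{A ∈ 𝔲(m) : ‖A‖ < 1/2}`, maps it into
`{B ∈ U(m) : ‖B - Id‖ < 2 sin(1/4)}`, and every such `B` has a unique preimage there. -/
theorem stmt_2 (m : ℕ) :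
    (∀ A₁ A₂ : EuclideanSpace ℂ (Fin m) →L[ℂ] EuclideanSpace ℂ (Fin m),
      ContinuousLinearMap.adjoint A₁ = -A₁ → ContinuousLinearMap.adjoint A₂ = -A₂ →
      ‖A₁‖ < 1 / 2 → ‖A₂‖ < 1 / 2 →
      NormedSpace.exp A₁ = NormedSpace.exp A₂ → A₁ = A₂) ∧
    (∀ A : EuclideanSpace ℂ (Fin m) →L[ℂ] EuclideanSpace ℂ (Fin m),
      ContinuousLinearMap.adjoint A = -A → ‖A‖ < 1 / 2 →
      NormedSpace.exp A ∈ unitary (EuclideanSpace ℂ (Fin m) →L[ℂ] EuclideanSpace ℂ (Fin m)) ∧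
      ‖NormedSpace.exp A - 1‖ < 2 * Real.sin (1 / 4)) ∧
    (∀ B ∈ unitary (EuclideanSpace ℂ (Fin m) →L[ℂ] EuclideanSpace ℂ (Fin m)),
      ‖B - 1‖ < 2 * Real.sin (1 / 4) →
      ∃! A : EuclideanSpace ℂ (Fin m) →L[ℂ] EuclideanSpace ℂ (Fin m),
        ContinuousLinearMap.adjoint A = -A ∧ ‖A‖ < 1 / 2 ∧ NormedSpace.exp A = B) := by
  have hpi : (1 / 2 : ℝ) ≤ π := by linarith [Real.pi_gt_three]
  have hsin : Real.sin (1 / 2 / 2) = Real.sin (1 / 4) := by norm_num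
  have hskew (a : EuclideanSpace ℂ (Fin m) →L[ℂ] EuclideanSpace ℂ (Fin m)) (ha : adjoint a = -a) :
      a ∈ skewAdjoint _ :=
    skewAdjoint.mem_iff.mpr ((star_eq_adjoint a).trans ha)
  have hinj {a b : EuclideanSpace ℂ (Fin m) →L[ℂ] EuclideanSpace ℂ (Fin m)}
      (ha : adjoint a = -a) (hb : adjoint b = -b) (han : ‖a‖ < 1 / 2) (hbn : ‖b‖ < 1 / 2)
      (h : NormedSpace.exp a = NormedSpace.exp b) : a = b :=
    injOn_exp_of_norm_lt_pi ⟨skewAdjoint.isStarNormal_of_mem (hskew a ha), han.trans_le hpi⟩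
      ⟨skewAdjoint.isStarNormal_of_mem (hskew b hb), hbn.trans_le hpi⟩ h
  refine ⟨fun a b ha hb han hbn h => hinj ha hb han hbn h, fun a ha han =>
    ⟨exp_mem_unitary_of_mem_skewAdjoint (hskew a ha),
      hsin ▸ norm_exp_sub_one_lt_two_mul_sin (hskew a ha) hpi han⟩, fun u hu hun => ?_⟩
  have hun2 : ‖u - 1‖ < 2 := hun.trans_le (by linarith [Real.sin_le_one (1 / 4)])
  have hlog : adjoint (cfc log u) = -cfc log u :=
    (star_eq_adjoint _).symm.trans (cfc_log_mem_skewAdjoint hu)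
  have hlogn : ‖cfc log u‖ < 1 / 2 := norm_cfc_log_lt hu one_half_pos hpi (hsin ▸ hun)
  have hexp : NormedSpace.exp (cfc log u) = u :=
    exp_cfc_log (isStarNormal_of_mem_unitary hu) (spectrum_subset_slitPlane_of_mem_unitary hu hun2)
  exact ⟨cfc log u, ⟨hlog, hlogn, hexp⟩,
    fun a ⟨ha, han, h⟩ => hinj ha hlog han hlogn (h.trans hexp.symm)⟩
end
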